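/- Let S : [t₀,t₁] × ℝⁿ → ℝ be C^{1,2}, λ > 0, and define φ := exp(S/λ). Suppose S satisfies the dual (HJB-type) PDE ∂S/∂t + ⟨∇S, f⟩ + (1/2)⟨∇S, ggᵀ∇S⟩ + (1/2)⟨Σ, Hess S⟩ = q. Then φ satisfies ∂φ/∂t + ⟨∇φ, f⟩ + (1/2)⟨Σ, Hess φ⟩ − qφ/λ + (1/2)⟨∇φ, (λggᵀ − Σ)∇log φ⟩ = 0. -/

import Mathlib

/-!
For `φ = exp (S / λ)` the chain rule gives `∂ₜφ = φ ∂ₜS / λ`, `∇φ = φ ∇S / λ`,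
`Hess φ = φ (Hess S / λ + ∇S ∇Sᵀ / λ²)` and `∇ log φ = ∇S / λ`. Substituting these, the left-hand
side of the equation for `φ` becomes `φ / λ` times the residual of the HJB equation for `S`.
-/

open scoped BigOperators Matrix

/-- Spatial partial derivative in the `i`-th coordinate direction. -/
noncomputable def pd {n : ℕ} (i : Fin n) (f : (Fin n → ℝ) → ℝ) (x : Fin n → ℝ) : ℝ :=
  fderiv ℝ f x (Pi.single i 1)

section PartialDerivative

variable {n : ℕ} (i : Fin n) {u v : (Fin n → ℝ) → ℝ} {x : Fin n → ℝ}

theorem pd_div_const (c : ℝ) :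
    pd i (fun y => u y / c) x = pd i u x / c := by
  have hu : (fun y => u y / c) = c⁻¹ • u := by
    funext y
    simp [div_eq_inv_mul]
  rw [pd, hu, fderiv_const_smul_field]
  simp [pd, div_eq_inv_mul]

theorem pd_mul (hu : DifferentiableAt ℝ u x) (hv : DifferentiableAt ℝ v x) :
    pd i (fun y => u y * v y) x = u x * pd i v x + v x * pd i u x := by
  simp [pd, fderiv_fun_mul hu hv]

theorem pd_exp (hu : DifferentiableAt ℝ u x) :
    pd i (fun y => Real.exp (u y)) x = Real.exp (u x) * pd i u x := by
  simp [pd, fderiv_exp hu]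

theorem differentiable_pd (hu : ContDiff ℝ 2 u) : Differentiable ℝ (pd i u) :=
  ((hu.fderiv_right (m := 1) (by norm_num)).clm_apply contDiff_const).differentiable one_ne_zero

end PartialDerivative

section ExpDiv

variable {n : ℕ} {S : (Fin n → ℝ) → ℝ} (l : ℝ)

theorem pd_exp_div (hS : Differentiable ℝ S) (i : Fin n) (x : Fin n → ℝ) :
    pd i (fun y => Real.exp (S y / l)) x = Real.exp (S x / l) / l * pd i S x := by
  rw [pd_exp i (by fun_prop), pd_div_const]
  ring

theorem pd_pd_exp_div (hS : ContDiff ℝ 2 S) (i j : Fin n) (x : Fin n → ℝ) :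
    pd i (pd j fun y => Real.exp (S y / l)) x
      = Real.exp (S x / l) / l * pd i (pd j S) x
        + Real.exp (S x / l) / l ^ 2 * pd i S x * pd j S x := by
  have hSd : Differentiable ℝ S := hS.differentiable (by norm_num)
  have hpd : pd j (fun y => Real.exp (S y / l)) = fun y => Real.exp (S y / l) / l * pd j S y :=
    funext (pd_exp_div l hSd j)
  have hE : DifferentiableAt ℝ (fun y => Real.exp (S y / l) / l) x := by fun_prop
  rw [hpd, pd_mul i hE (differentiable_pd j hS x), pd_div_const, pd_exp_div l hSd]
  ring

end ExpDiv

/-- The `Σ ∇S ∇Sᵀ` part of `Hess φ` cancels the `Σ` part of the correction term. -/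
theorem hopf_cole_identity {n : ℕ} {l : ℝ} (hl : l ≠ 0) (E : ℝ) (v b : Fin n → ℝ)
    (A Sig H : Matrix (Fin n) (Fin n) ℝ) :
    (fun i => E / l * v i) ⬝ᵥ b
        + 1 / 2 * ∑ i, ∑ j, Sig i j * (E / l * H i j + E / l ^ 2 * v i * v j)
        + 1 / 2 * ((fun i => E / l * v i) ⬝ᵥ (l • A - Sig) *ᵥ fun j => v j / l)
      = E / l * (v ⬝ᵥ b + 1 / 2 * (v ⬝ᵥ A *ᵥ v) + 1 / 2 * ∑ i, ∑ j, Sig i j * H i j) := by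
  have hdrift : (fun i => E / l * v i) ⬝ᵥ b = E / l * (v ⬝ᵥ b) := smul_dotProduct (E / l) v b
  have hquad : v ⬝ᵥ Sig *ᵥ v = ∑ i, ∑ j, Sig i j * v i * v j := by
    simp only [dotProduct, Matrix.mulVec, Finset.mul_sum]
    congr! 2 with i - j -
    ring
  have hhess : ∑ i, ∑ j, Sig i j * (E / l * H i j + E / l ^ 2 * v i * v j)
      = E / l * ∑ i, ∑ j, Sig i j * H i j + E / l ^ 2 * (v ⬝ᵥ Sig *ᵥ v) := by
    simp only [hquad, Finset.mul_sum, ← Finset.sum_add_distrib]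
    congr! 2 with i - j -
    ring
  have hcorr : (fun i => E / l * v i) ⬝ᵥ (l • A - Sig) *ᵥ (fun j => v j / l)
      = E / l * (v ⬝ᵥ A *ᵥ v) - E / l ^ 2 * (v ⬝ᵥ Sig *ᵥ v) := by
    simp only [dotProduct, Matrix.mulVec, Matrix.sub_apply, Matrix.smul_apply, smul_eq_mul,
      Finset.mul_sum, ← Finset.sum_sub_distrib]
    congr! 2 with i - j -
    field_simp
  rw [hdrift, hhess, hcorr]
  ring

/-- If `S` satisfies the dual HJB-type PDE, then `φ = e^{S/λ}` satisfies the
semi-transformed backward equation. -/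
theorem hjb_to_phi_pde {n m : ℕ} (t₀ t₁ : ℝ)
    (S : ℝ → (Fin n → ℝ) → ℝ)
    (f : ℝ → (Fin n → ℝ) → Fin n → ℝ)
    (g : ℝ → (Fin n → ℝ) → Matrix (Fin n) (Fin m) ℝ)
    (Sig : ℝ → (Fin n → ℝ) → Matrix (Fin n) (Fin n) ℝ)
    (q : ℝ → (Fin n → ℝ) → ℝ)
    (l : ℝ) (hl : 0 < l)
    (hSx : ∀ t, ContDiff ℝ 2 (S t))
    (hSt : ∀ x, ContDiff ℝ 1 (fun t => S t x))
    (hHJB : ∀ t ∈ Set.Icc t₀ t₁, ∀ x,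
      deriv (fun τ => S τ x) t
        + (fun i => pd i (S t) x) ⬝ᵥ f t x
        + (1 / 2 : ℝ) * ((fun i => pd i (S t) x) ⬝ᵥ
            (g t x * (g t x).transpose).mulVec (fun j => pd j (S t) x))
        + (1 / 2 : ℝ) * (∑ i, ∑ j, Sig t x i j * pd i (pd j (S t)) x)
        = q t x) :
    ∀ t ∈ Set.Icc t₀ t₁, ∀ x,
      deriv (fun τ => Real.exp (S τ x / l)) t
        + (fun i => pd i (fun y => Real.exp (S t y / l)) x) ⬝ᵥ f t x
        + (1 / 2 : ℝ) * (∑ i, ∑ j, Sig t x i j *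
            pd i (pd j (fun y => Real.exp (S t y / l))) x)
        - q t x * Real.exp (S t x / l) / l
        + (1 / 2 : ℝ) * ((fun i => pd i (fun y => Real.exp (S t y / l)) x) ⬝ᵥ
            (l • (g t x * (g t x).transpose) - Sig t x).mulVec
              (fun j => pd j (fun y => Real.log (Real.exp (S t y / l))) x))
        = 0 := by
  intro t ht x
  have hSdiff : Differentiable ℝ (S t) := (hSx t).differentiable (by norm_num)
  have hSτ : DifferentiableAt ℝ (fun τ => S τ x) t := (hSt x).differentiable one_ne_zero t
  simp only [Real.log_exp, pd_div_const, pd_exp_div l hSdiff, pd_pd_exp_div l (hSx t),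
    deriv_exp (hSτ.div_const l), deriv_div_const]
  linear_combination (Real.exp (S t x / l) / l) * hHJB t ht x
    + hopf_cole_identity hl.ne' (Real.exp (S t x / l)) (fun i => pd i (S t) x) (f t x)
      (g t x * (g t x)ᵀ) (Sig t x) (fun i j => pd i (pd j (S t)) x)
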